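/- arXiv:2511.17617 — 4 statements merged into one kernel-verified Lean document; each statement's English description precedes it below -/
import Mathlib

section
/- Soundness of the until unitary construction: let s : ℝ → Prop be a signal, let φ₁ hold exactly on the interval I₁ = [m₁,n₁) and φ₂ hold exactly on I₂ = [m₂,n₂), and let 0 ≤ a ≤ b. Then for every t ∈ ((I₁ ∩ I₂) ⊖ [a,b]) ∩ I₁, there exists t' ∈ [t+a, t+b] with t' ∈ I₂ and for all t'' ∈ [t, t'], t'' ∈ I₁. -/
open Set

theorem exists_mem_Icc_mem_Ico {α : Type*} [LinearOrder α] {p q l u : α}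
    (hpq : p ≤ q) (hlq : l ≤ q) (hpu : p < u) (hlu : l < u) :
    ∃ x ∈ Icc p q, x ∈ Ico l u :=
  ⟨max p l, ⟨le_max_left p l, max_le hpq hlq⟩, le_max_right p l, max_lt hpu hlu⟩

theorem until_unitary_sound_general (m₁ n₁ m₂ n₂ a b : ℝ)
    (hne : max m₁ m₂ < min n₁ n₂)
    (hab : a ≤ b) :
    ∀ t ∈ (Set.Ico (max m₁ m₂ - b) (min n₁ n₂ - a) ∩ Set.Ici (0 : ℝ))
        ∩ Set.Ico m₁ n₁,
      ∃ t' ∈ Set.Icc (t + a) (t + b),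
        t' ∈ Set.Ico m₂ n₂ ∧ ∀ t'' ∈ Set.Icc t t', t'' ∈ Set.Ico m₁ n₁ := by
  rintro t ⟨⟨⟨hbt, hta⟩, -⟩, hm₁t, -⟩
  obtain ⟨t', ht'ab, ht'⟩ := exists_mem_Icc_mem_Ico (add_le_add_right hab t)
    (by linarith : max m₁ m₂ ≤ t + b) (by linarith : t + a < min n₁ n₂) hne
  rw [← Ico_inter_Ico] at ht'
  exact ⟨t', ht'ab, ht'.2, Icc_subset_Ico_right ht'.1.2 |>.trans (Ico_subset_Ico_left hm₁t)⟩

/-- Soundness of the until unitary construction: every time point in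
`((I₁ ∩ I₂) ⊖ [a,b]) ∩ I₁` satisfies the until semantics, where
`I₁ = [m₁,n₁)`, `I₂ = [m₂,n₂)` are the exact satisfaction intervals. -/
theorem until_unitary_sound (m₁ n₁ m₂ n₂ a b : ℝ)
    (h₁ : m₁ < n₁) (h₂ : m₂ < n₂)
    (hne : max m₁ m₂ < min n₁ n₂)
    (h0a : 0 ≤ a) (hab : a ≤ b) :
    ∀ t ∈ (Set.Ico (max m₁ m₂ - b) (min n₁ n₂ - a) ∩ Set.Ici (0 : ℝ))
        ∩ Set.Ico m₁ n₁,
      ∃ t' ∈ Set.Icc (t + a) (t + b),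
        t' ∈ Set.Ico m₂ n₂ ∧ ∀ t'' ∈ Set.Icc t t', t'' ∈ Set.Ico m₁ n₁ :=
  until_unitary_sound_general m₁ n₁ m₂ n₂ a b hne hab
end

section
/- Completeness of the until unitary construction for unitary signals: with φ₁ true exactly on I₁ = [m₁,n₁) and φ₂ true exactly on I₂ = [m₂,n₂), and 0 ≤ a ≤ b, if t ∈ [0,∞), t ∈ I₁, and there exists t' ∈ [t+a,t+b] with t' ∈ I₂ and [t,t'] ⊆ I₁, then t ∈ ((I₁ ∩ I₂) ⊖ [a,b]) ∩ I₁. -/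
open Set

theorem mem_Ico_sub_of_mem_Icc_add {α : Type*} [AddCommGroup α] [PartialOrder α]
    [IsOrderedAddMonoid α] {m n a b t t' : α} (ht' : t' ∈ Icc (t + a) (t + b))
    (h : t' ∈ Ico m n) : t ∈ Ico (m - b) (n - a) :=
  ⟨sub_le_iff_le_add.2 (h.1.trans ht'.2),
    lt_sub_iff_add_lt.2 (ht'.1.trans_lt h.2)⟩

theorem until_unitary_complete_general (m₁ n₁ m₂ n₂ a b t : ℝ)
    (h0a : 0 ≤ a) (ht : 0 ≤ t)
    (htI₁ : t ∈ Set.Ico m₁ n₁)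
    (hsem : ∃ t' ∈ Set.Icc (t + a) (t + b),
      t' ∈ Set.Ico m₂ n₂ ∧ Set.Icc t t' ⊆ Set.Ico m₁ n₁) :
    t ∈ (Set.Ico (max m₁ m₂ - b) (min n₁ n₂ - a) ∩ Set.Ici (0 : ℝ))
        ∩ Set.Ico m₁ n₁ := by
  obtain ⟨t', ht', ht'I₂, hsub⟩ := hsem
  have htt' : t ≤ t' := (le_add_of_nonneg_right h0a).trans ht'.1
  have ht'I₁ : t' ∈ Ico m₁ n₁ := hsub ⟨htt', le_rfl⟩
  have ht'I : t' ∈ Ico (max m₁ m₂) (min n₁ n₂) := by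
    rw [← Ico_inter_Ico]; exact ⟨ht'I₁, ht'I₂⟩
  exact ⟨⟨mem_Ico_sub_of_mem_Icc_add ht' ht'I, ht⟩, htI₁⟩

/-- Completeness of the until unitary construction: if the until semantics
holds at `t ∈ I₁`, then `t ∈ ((I₁ ∩ I₂) ⊖ [a,b]) ∩ I₁`. -/
theorem until_unitary_complete (m₁ n₁ m₂ n₂ a b t : ℝ)
    (h₁ : m₁ < n₁) (h₂ : m₂ < n₂)
    (h0a : 0 ≤ a) (hab : a ≤ b) (ht : 0 ≤ t)
    (htI₁ : t ∈ Set.Ico m₁ n₁)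
    (hsem : ∃ t' ∈ Set.Icc (t + a) (t + b),
      t' ∈ Set.Ico m₂ n₂ ∧ Set.Icc t t' ⊆ Set.Ico m₁ n₁) :
    t ∈ (Set.Ico (max m₁ m₂ - b) (min n₁ n₂ - a) ∩ Set.Ici (0 : ℝ))
        ∩ Set.Ico m₁ n₁ :=
  until_unitary_complete_general m₁ n₁ m₂ n₂ a b t h0a ht htI₁ hsem
end

section
/- Monotonicity of the interval until semantics: let S₁, S₂, S₁', S₂' : ℝ → Set Bool be satisfaction signals with S₁'(t) ⊆ S₁(t) and S₂'(t) ⊆ S₂(t) nonempty for all t (refinement). Define Until(S₁,S₂)(t) = {1} if ∃ t' ∈ [t+a,t+b] with S₂(t') = {1} and ∀ t'' ∈ [t,t'], S₁(t'') = {1}; = {0} if ∀ t' ∈ [t+a,t+b], S₂(t') = {0} or ∃ t'' ∈ [t,t'], S₁(t'') = {0}; = {0,1} otherwise. Then Until(S₁',S₂')(t) ⊆ Until(S₁,S₂)(t) for all t, i.e., refining inputs can only refine the until output (definite values are preserved). -/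
open scoped Classical

/-- The three-valued interval until semantics. -/
noncomputable def untilItv (a b : ℝ) (S₁ S₂ : ℝ → Set Bool) : ℝ → Set Bool :=
  fun t =>
    if ∃ t' ∈ Set.Icc (t + a) (t + b),
        S₂ t' = ({true} : Set Bool) ∧
        ∀ t'' ∈ Set.Icc t t', S₁ t'' = ({true} : Set Bool) then {true}
    else if ∀ t' ∈ Set.Icc (t + a) (t + b),
        S₂ t' = ({false} : Set Bool) ∨
        ∃ t'' ∈ Set.Icc t t', S₁ t'' = ({false} : Set Bool) then {false}
    else {false, true}

/- Both definite verdicts of `untilItv` are preserved under refinement and exclude each other,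
so a refined output is either the same singleton or lies below `{false, true}`. -/

open Set

lemma Set.Nonempty.eq_singleton_of_subset {α : Type*} {s t : Set α} {x : α}
    (hs : s.Nonempty) (hst : s ⊆ t) (ht : t = {x}) : s = {x} :=
  hs.subset_singleton_iff.mp (ht ▸ hst)

lemma threeValued_subset {P Q P' Q' : Prop} [Decidable P] [Decidable Q] [Decidable P']
    [Decidable Q'] (hP : P → P') (hQ : Q → Q') (hexcl : P' → ¬Q') :
    (if P' then {true} else if Q' then {false} else {false, true} : Set Bool) ⊆
      if P then {true} else if Q then {false} else {false, true} := by
  by_cases hp : P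
  · simp [hp, hP hp]
  by_cases hq : Q
  · have hp' : ¬P' := fun h => hexcl h (hQ hq)
    simp [hp, hq, hp', hQ hq]
  · simp only [hp, hq, if_false]
    intro x _
    cases x <;> simp

def UntilHolds (a b : ℝ) (S₁ S₂ : ℝ → Set Bool) (t : ℝ) : Prop :=
  ∃ t' ∈ Icc (t + a) (t + b), S₂ t' = {true} ∧ ∀ t'' ∈ Icc t t', S₁ t'' = {true}

def UntilFails (a b : ℝ) (S₁ S₂ : ℝ → Set Bool) (t : ℝ) : Prop :=
  ∀ t' ∈ Icc (t + a) (t + b), S₂ t' = {false} ∨ ∃ t'' ∈ Icc t t', S₁ t'' = {false}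

lemma untilItv_eq (a b : ℝ) (S₁ S₂ : ℝ → Set Bool) (t : ℝ) :
    untilItv a b S₁ S₂ t =
      if UntilHolds a b S₁ S₂ t then {true}
      else if UntilFails a b S₁ S₂ t then {false} else {false, true} :=
  rfl

lemma not_untilHolds_of_untilFails {a b : ℝ} {S₁ S₂ : ℝ → Set Bool} {t : ℝ}
    (hF : UntilFails a b S₁ S₂ t) : ¬UntilHolds a b S₁ S₂ t := by
  rintro ⟨t', ht', h₂true, h₁true⟩
  rcases hF t' ht' with h₂false | ⟨t'', ht'', h₁false⟩
  · exact absurd (h₂true.symm.trans h₂false) (by simp)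
  · exact absurd ((h₁true t'' ht'').symm.trans h₁false) (by simp)

section Refinement

variable {a b : ℝ} {S₁ S₂ S₁' S₂' : ℝ → Set Bool} {t : ℝ}

lemma UntilHolds.of_refines (h₁ : ∀ t, S₁' t ⊆ S₁ t) (h₂ : ∀ t, S₂' t ⊆ S₂ t)
    (h₁ne : ∀ t, (S₁' t).Nonempty) (h₂ne : ∀ t, (S₂' t).Nonempty)
    (hT : UntilHolds a b S₁ S₂ t) : UntilHolds a b S₁' S₂' t := by
  obtain ⟨t', ht', h₂true, h₁true⟩ := hT
  exact ⟨t', ht', (h₂ne t').eq_singleton_of_subset (h₂ t') h₂true,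
    fun t'' ht'' => (h₁ne t'').eq_singleton_of_subset (h₁ t'') (h₁true t'' ht'')⟩

lemma UntilFails.of_refines (h₁ : ∀ t, S₁' t ⊆ S₁ t) (h₂ : ∀ t, S₂' t ⊆ S₂ t)
    (h₁ne : ∀ t, (S₁' t).Nonempty) (h₂ne : ∀ t, (S₂' t).Nonempty)
    (hF : UntilFails a b S₁ S₂ t) : UntilFails a b S₁' S₂' t := by
  intro t' ht'
  rcases hF t' ht' with h₂false | ⟨t'', ht'', h₁false⟩
  · exact Or.inl ((h₂ne t').eq_singleton_of_subset (h₂ t') h₂false)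
  · exact Or.inr ⟨t'', ht'', (h₁ne t'').eq_singleton_of_subset (h₁ t'') h₁false⟩

end Refinement

theorem untilItv_monotone_general (a b : ℝ)
    (S₁ S₂ S₁' S₂' : ℝ → Set Bool)
    (h₁ : ∀ t, S₁' t ⊆ S₁ t) (h₂ : ∀ t, S₂' t ⊆ S₂ t)
    (h₁ne : ∀ t, (S₁' t).Nonempty) (h₂ne : ∀ t, (S₂' t).Nonempty) :
    ∀ t, untilItv a b S₁' S₂' t ⊆ untilItv a b S₁ S₂ t := by
  intro t
  rw [untilItv_eq, untilItv_eq]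
  exact threeValued_subset (UntilHolds.of_refines h₁ h₂ h₁ne h₂ne)
    (UntilFails.of_refines h₁ h₂ h₁ne h₂ne) fun hT hF => not_untilHolds_of_untilFails hF hT

/-- Monotonicity of the interval until semantics: refining the inputs can only
refine the until output. -/
theorem untilItv_monotone (a b : ℝ) (h0a : 0 ≤ a) (hab : a ≤ b)
    (S₁ S₂ S₁' S₂' : ℝ → Set Bool)
    (h₁ : ∀ t, S₁' t ⊆ S₁ t) (h₂ : ∀ t, S₂' t ⊆ S₂ t)
    (h₁ne : ∀ t, (S₁' t).Nonempty) (h₂ne : ∀ t, (S₂' t).Nonempty) :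
    ∀ t, untilItv a b S₁' S₂' t ⊆ untilItv a b S₁ S₂ t :=
  untilItv_monotone_general a b S₁ S₂ S₁' S₂' h₁ h₂ h₁ne h₂ne
end

section
/- Soundness of interval satisfaction for the until operator: suppose S₁, S₂ : ℝ → Set Bool enclose Boolean signals b₁, b₂ : ℝ → Bool. Define bU(t) = true iff ∃ t' ∈ [t+a,t+b], b₂(t') = true and ∀ t'' ∈ [t,t'], b₁(t'') = true. Define the interval until SU(t) = {1} if ∃ t' ∈ [t+a,t+b], S₂(t') = {1} and ∀ t'' ∈ [t,t'], S₁(t'') = {1}; SU(t) = {0} if ∀ t' ∈ [t+a,t+b], (S₂(t') = {0} or ∃ t'' ∈ [t,t'], S₁(t'') = {0}); and SU(t) = {0,1} otherwise. Then bU(t) ∈ SU(t) for all t. -/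
open scoped Classical

/-- Classical until on Boolean signals. -/
noncomputable def boolUntil (a b : ℝ) (b₁ b₂ : ℝ → Bool) : ℝ → Bool :=
  fun t =>
    if ∃ t' ∈ Set.Icc (t + a) (t + b),
        b₂ t' = true ∧ ∀ t'' ∈ Set.Icc t t', b₁ t'' = true then true
    else false

/-- Three-valued interval until semantics over satisfaction signals. -/
noncomputable def itvUntil (a b : ℝ) (S₁ S₂ : ℝ → Set Bool) : ℝ → Set Bool :=
  fun t =>
    if ∃ t' ∈ Set.Icc (t + a) (t + b),
        S₂ t' = ({true} : Set Bool) ∧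
        ∀ t'' ∈ Set.Icc t t', S₁ t'' = ({true} : Set Bool) then {true}
    else if ∀ t' ∈ Set.Icc (t + a) (t + b),
        S₂ t' = ({false} : Set Bool) ∨
        ∃ t'' ∈ Set.Icc t t', S₁ t'' = ({false} : Set Bool) then {false}
    else {false, true}

/-! An enclosure that is a singleton pins the signal down, so both definite verdicts of
`itvUntil` transfer to the Boolean signals; in the remaining case `itvUntil` is all of `Bool`. -/

namespace Enclosure

theorem eq_of_eq_singleton {S : ℝ → Set Bool} {β : ℝ → Bool} (hβ : ∀ t, β t ∈ S t) {t : ℝ}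
    {v : Bool} (hS : S t = {v}) : β t = v :=
  Set.mem_singleton_iff.mp (hS ▸ hβ t)

variable {S₁ S₂ : ℝ → Set Bool} {b₁ b₂ : ℝ → Bool} {I : Set ℝ} {t : ℝ}

theorem exists_until_of_exists_until_true (h₁ : ∀ t, b₁ t ∈ S₁ t) (h₂ : ∀ t, b₂ t ∈ S₂ t)
    (hS : ∃ t' ∈ I, S₂ t' = {true} ∧ ∀ t'' ∈ Set.Icc t t', S₁ t'' = {true}) :
    ∃ t' ∈ I, b₂ t' = true ∧ ∀ t'' ∈ Set.Icc t t', b₁ t'' = true := by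
  obtain ⟨t', ht', hS₂, hS₁⟩ := hS
  exact ⟨t', ht', eq_of_eq_singleton h₂ hS₂,
    fun t'' ht'' => eq_of_eq_singleton h₁ (hS₁ t'' ht'')⟩

theorem not_exists_until_of_forall_until_false (h₁ : ∀ t, b₁ t ∈ S₁ t)
    (h₂ : ∀ t, b₂ t ∈ S₂ t)
    (hS : ∀ t' ∈ I, S₂ t' = {false} ∨ ∃ t'' ∈ Set.Icc t t', S₁ t'' = {false}) :
    ¬ ∃ t' ∈ I, b₂ t' = true ∧ ∀ t'' ∈ Set.Icc t t', b₁ t'' = true := by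
  rintro ⟨t', ht', hb₂, hb₁⟩
  rcases hS t' ht' with hS₂ | ⟨t'', ht'', hS₁⟩
  · simp [eq_of_eq_singleton h₂ hS₂] at hb₂
  · simpa [eq_of_eq_singleton h₁ hS₁] using hb₁ t'' ht''

end Enclosure

theorem itvUntil_sound_general (a b : ℝ)
    (S₁ S₂ : ℝ → Set Bool) (b₁ b₂ : ℝ → Bool)
    (h₁ : ∀ t, b₁ t ∈ S₁ t) (h₂ : ∀ t, b₂ t ∈ S₂ t) :
    ∀ t, boolUntil a b b₁ b₂ t ∈ itvUntil a b S₁ S₂ t := by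
  intro t
  unfold boolUntil itvUntil
  split_ifs with hsat hb hviol hb
  · rfl
  · exact absurd (Enclosure.exists_until_of_exists_until_true h₁ h₂ hsat) hb
  · exact absurd hb (Enclosure.not_exists_until_of_forall_until_false h₁ h₂ hviol)
  · rfl
  all_goals simp

/-- Soundness of the guaranteed interval until semantics w.r.t. classical
STL until: the Boolean until value is enclosed by the interval until. -/
theorem itvUntil_sound (a b : ℝ) (h0a : 0 ≤ a) (hab : a ≤ b)
    (S₁ S₂ : ℝ → Set Bool) (b₁ b₂ : ℝ → Bool)
    (h₁ : ∀ t, b₁ t ∈ S₁ t) (h₂ : ∀ t, b₂ t ∈ S₂ t) :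
    ∀ t, boolUntil a b b₁ b₂ t ∈ itvUntil a b S₁ S₂ t :=
  itvUntil_sound_general a b S₁ S₂ b₁ b₂ h₁ h₂
end
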